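/- arXiv:1506.05937 — 2 statements merged into one kernel-verified Lean document; each statement's English description precedes it below -/
import Mathlib

section
/- Let ℓ be a binomial random variable with parameters n and λ/n where λ ≤ n. Then E[ℓ | ℓ > 2λ] < 3λ + 1. -/
/-!
For `k ≥ 2λ + 1 ≥ np` the binomial weights satisfy `(k + 1) b(k + 1) ≤ np · b(k) = λ b(k)`, so
`b(k + 1) ≤ ρ b(k)` with `ρ = λ / (2λ + 2) < 1/2`. Conditionally on `ℓ > 2λ`, the overshoot
`ℓ - (2λ + 1)` is therefore dominated by a geometric law of ratio `ρ`, whose mean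
`ρ / (1 - ρ)` is less than `1`; hence `E[ℓ | ℓ > 2λ] < 2λ + 2 ≤ 3λ + 1`.
-/

open MeasureTheory ProbabilityTheory Finset

lemma one_sub_mul_sum_range_mul_le_of_succ_le {q : ℕ → ℝ} {ρ : ℝ} (hq : ∀ j, 0 ≤ q j)
    (hqρ : ∀ j, q (j + 1) ≤ ρ * q j) (N : ℕ) :
    (1 - ρ) * ∑ j ∈ range N, q j * j ≤ ρ * ∑ j ∈ range N, q j := by
  have hshift : ∑ j ∈ range N, q j * j ≤ ρ * ∑ j ∈ range N, q j * (j + 1) :=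
    calc ∑ j ∈ range N, q j * j ≤ ∑ j ∈ range (N + 1), q j * j :=
          sum_le_sum_of_subset_of_nonneg (range_subset_range.2 N.le_succ)
            fun j _ _ => mul_nonneg (hq j) j.cast_nonneg
      _ = ∑ j ∈ range N, q (j + 1) * (j + 1) := by simp [sum_range_succ']
      _ ≤ ∑ j ∈ range N, ρ * q j * (j + 1) :=
          sum_le_sum fun j _ => mul_le_mul_of_nonneg_right (hqρ j) (by positivity)
      _ = ρ * ∑ j ∈ range N, q j * (j + 1) := by
          rw [mul_sum]; exact sum_congr rfl fun j _ => by ring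
  simp only [mul_add, mul_one, sum_add_distrib] at hshift
  linarith

lemma sum_Ico_mul_le_of_succ_le {w : ℕ → ℝ} {ρ : ℝ} {m : ℕ} (hw : ∀ k, 0 ≤ w k) (hρ : ρ < 1)
    (hwρ : ∀ k, m ≤ k → w (k + 1) ≤ ρ * w k) (N : ℕ) :
    ∑ k ∈ Ico m N, w k * k ≤ (m + ρ / (1 - ρ)) * ∑ k ∈ Ico m N, w k := by
  have htail := one_sub_mul_sum_range_mul_le_of_succ_le (q := fun j => w (m + j)) (fun j => hw _)
    (fun j => hwρ (m + j) (Nat.le_add_right m j)) (N - m)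
  rw [sum_Ico_eq_sum_range, sum_Ico_eq_sum_range]
  push_cast
  simp only [mul_add, sum_add_distrib, ← sum_mul, add_mul]
  set S := ∑ j ∈ range (N - m), w (m + j)
  have hT : ∑ j ∈ range (N - m), w (m + j) * j ≤ ρ / (1 - ρ) * S := by
    rw [div_mul_eq_mul_div, le_div_iff₀ (sub_pos.2 hρ)]; linarith
  linarith

theorem integral_comp_eq_sum_of_ae_mem {Ω α E : Type*} [MeasurableSpace Ω] [MeasurableSpace α]
    [MeasurableSingletonClass α] [NormedAddCommGroup E] [NormedSpace ℝ E] [CompleteSpace E]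
    {ν : Measure Ω} [IsFiniteMeasure ν] {L : Ω → α} (hL : Measurable L) {s : Finset α}
    (hs : ∀ᵐ ω ∂ν, L ω ∈ s) (f : α → E) :
    ∫ ω, f (L ω) ∂ν = ∑ a ∈ s, ν.real {ω | L ω = a} • f a := by
  have hfiber : ∀ a, MeasurableSet {ω | L ω = a} := fun a => hL (measurableSet_singleton a)
  calc ∫ ω, f (L ω) ∂ν = ∫ ω, ∑ a ∈ s, {ω | L ω = a}.indicator (fun _ => f a) ω ∂ν := by
        refine integral_congr_ae (hs.mono fun ω hω => ?_)
        dsimp only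
        rw [sum_eq_single_of_mem (L ω) hω fun a _ ha =>
          Set.indicator_of_notMem (s := {ω | L ω = a}) (Ne.symm ha) _]
        simp
    _ = ∑ a ∈ s, ν.real {ω | L ω = a} • f a := by
        rw [integral_finsetSum _ fun a _ => (integrable_const _).indicator (hfiber a)]
        exact sum_congr rfl fun a _ => integral_indicator_const _ (hfiber a)

lemma cond_real_of_subset {Ω : Type*} [MeasurableSpace Ω] {μ : Measure Ω} {s t : Set Ω}
    (hs : MeasurableSet s) (ht : t ⊆ s) : (μ[|s]).real t = (μ s).toReal⁻¹ * μ.real t := by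
  rw [measureReal_def, cond_apply hs, Set.inter_eq_right.2 ht, ENNReal.toReal_mul,
    ENNReal.toReal_inv, measureReal_def]

lemma lt_of_ae_le_of_measure_lt_pos {Ω α : Type*} [MeasurableSpace Ω] [LinearOrder α]
    {μ : Measure Ω} {L : Ω → α} {a b : α} (hle : ∀ᵐ ω ∂μ, L ω ≤ b)
    (hpos : 0 < μ {ω | a < L ω}) : a < b := by
  by_contra! h
  exact hpos.ne' (measure_eq_zero_iff_ae_notMem.2
    (hle.mono fun ω hω hωa => (hω.trans h).not_gt hωa))

theorem integral_cond_le_of_measureReal_succ_le {Ω : Type*} [MeasurableSpace Ω] {μ : Measure Ω}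
    [IsFiniteMeasure μ] {L : Ω → ℕ} (hL : Measurable L) {m n : ℕ} {ρ : ℝ} (hρ : ρ < 1)
    (hle : ∀ᵐ ω ∂μ, L ω ≤ n) (hpos : μ {ω | m ≤ L ω} ≠ 0)
    (hratio : ∀ k, m ≤ k → μ.real {ω | L ω = k + 1} ≤ ρ * μ.real {ω | L ω = k}) :
    ∫ ω, (L ω : ℝ) ∂μ[|{ω | m ≤ L ω}] ≤ m + ρ / (1 - ρ) := by
  set A := {ω | m ≤ L ω}
  have hA : MeasurableSet A := hL measurableSet_Ici
  have := cond_isProbabilityMeasure hpos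
  have hw : ∀ k, m ≤ k → (μ[|A]).real {ω | L ω = k} = (μ A).toReal⁻¹ * μ.real {ω | L ω = k} :=
    fun k hk => cond_real_of_subset hA fun ω (hω : L ω = k) => show m ≤ L ω by omega
  have hwρ : ∀ k, m ≤ k →
      (μ[|A]).real {ω | L ω = k + 1} ≤ ρ * (μ[|A]).real {ω | L ω = k} := fun k hk => by
    rw [hw k hk, hw (k + 1) (by omega), mul_left_comm]
    exact mul_le_mul_of_nonneg_left (hratio k hk) (by positivity)
  have hsupp : ∀ᵐ ω ∂μ[|A], L ω ∈ Ico m (n + 1) := by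
    filter_upwards [ae_cond_mem hA, cond_absolutelyContinuous.ae_le hle] with ω hωA hωn
    exact mem_Ico.2 ⟨hωA, Nat.lt_succ_of_le hωn⟩
  have htotal : ∑ k ∈ Ico m (n + 1), (μ[|A]).real {ω | L ω = k} = 1 := by
    simpa using (integral_comp_eq_sum_of_ae_mem hL hsupp (fun _ => (1 : ℝ))).symm
  rw [integral_comp_eq_sum_of_ae_mem hL hsupp Nat.cast]
  simpa [htotal] using
    sum_Ico_mul_le_of_succ_le (w := fun k => (μ[|A]).real {ω | L ω = k})
      (fun k => measureReal_nonneg) hρ hwρ (n + 1)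

noncomputable def binomWeight (n : ℕ) (p : ℝ) (k : ℕ) : ℝ :=
  n.choose k * p ^ k * (1 - p) ^ (n - k)

lemma binomWeight_nonneg {n : ℕ} {p : ℝ} (hp₀ : 0 ≤ p) (hp₁ : p ≤ 1) (k : ℕ) :
    0 ≤ binomWeight n p k := by
  have : 0 ≤ 1 - p := sub_nonneg.2 hp₁
  unfold binomWeight; positivity

lemma binomWeight_of_lt {n k : ℕ} (p : ℝ) (hk : n < k) : binomWeight n p k = 0 := by
  simp [binomWeight, Nat.choose_eq_zero_of_lt hk]

lemma binomWeight_succ_mul (n : ℕ) (p : ℝ) (k : ℕ) :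
    binomWeight n p (k + 1) * (k + 1) * (1 - p) = binomWeight n p k * (n - k : ℕ) * p := by
  rcases lt_or_ge k n with hk | hk
  · have hchoose : (n.choose (k + 1) : ℝ) * (k + 1) = n.choose k * (n - k : ℕ) := by
      exact_mod_cast Nat.choose_succ_right_eq n k
    have hpow : (1 - p) ^ (n - k) = (1 - p) ^ (n - (k + 1)) * (1 - p) := by
      rw [← pow_succ]; congr 1; omega
    simp only [binomWeight, hpow, pow_succ]
    linear_combination p ^ k * p * (1 - p) ^ (n - (k + 1)) * (1 - p) * hchoose
  · simp [binomWeight_of_lt p (Nat.lt_succ_of_le hk), Nat.sub_eq_zero_of_le hk]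

lemma binomWeight_succ_mul_le {n k : ℕ} {p : ℝ} (hp₀ : 0 ≤ p) (hp₁ : p < 1) (hk : n * p ≤ k) :
    (k + 1) * binomWeight n p (k + 1) ≤ n * p * binomWeight n p k := by
  have hb := binomWeight_nonneg (n := n) hp₀ hp₁.le k
  have hnk : ((n - k : ℕ) : ℝ) ≤ n * (1 - p) := by
    rcases le_or_gt k n with h | h
    · rw [Nat.cast_sub h]; linarith
    · rw [Nat.sub_eq_zero_of_le h.le, Nat.cast_zero]; nlinarith
  refine le_of_mul_le_mul_right ?_ (sub_pos.2 hp₁)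
  calc (k + 1) * binomWeight n p (k + 1) * (1 - p) = binomWeight n p k * (n - k : ℕ) * p := by
        rw [← binomWeight_succ_mul]; ring
    _ ≤ binomWeight n p k * (n * (1 - p)) * p := by gcongr
    _ = n * p * binomWeight n p k * (1 - p) := by ring

lemma binomWeight_succ_le {n m k : ℕ} {p : ℝ} (hp₀ : 0 ≤ p) (hp₁ : p < 1) (hm : n * p ≤ m)
    (hk : m ≤ k) : binomWeight n p (k + 1) ≤ n * p / (m + 1) * binomWeight n p k := by
  have hmk : (m : ℝ) + 1 ≤ k + 1 := by exact_mod_cast Nat.succ_le_succ hk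
  have hb := binomWeight_nonneg (n := n) hp₀ hp₁.le (k + 1)
  rw [div_mul_eq_mul_div, le_div_iff₀ (by positivity)]
  calc binomWeight n p (k + 1) * (m + 1) ≤ (k + 1) * binomWeight n p (k + 1) := by nlinarith
    _ ≤ n * p * binomWeight n p k :=
        binomWeight_succ_mul_le hp₀ hp₁ (hm.trans (by exact_mod_cast hk))

lemma measureReal_succ_le_of_measure_eq_binomWeight {Ω : Type*} [MeasurableSpace Ω]
    {μ : Measure Ω} {L : Ω → ℕ} {n m k : ℕ} {p : ℝ}
    (hL : ∀ k, μ {ω | L ω = k} = ENNReal.ofReal (binomWeight n p k)) (hp₀ : 0 ≤ p) (hp₁ : p < 1)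
    (hm : n * p ≤ m) (hk : m ≤ k) :
    μ.real {ω | L ω = k + 1} ≤ n * p / (m + 1) * μ.real {ω | L ω = k} := by
  simp only [measureReal_def, hL, ENNReal.toReal_ofReal (binomWeight_nonneg hp₀ hp₁.le _)]
  exact binomWeight_succ_le hp₀ hp₁ hm hk

lemma ae_le_of_measure_eq_binomWeight {Ω : Type*} [MeasurableSpace Ω] {μ : Measure Ω}
    {L : Ω → ℕ} {n : ℕ} {p : ℝ}
    (hL : ∀ k, μ {ω | L ω = k} = ENNReal.ofReal (binomWeight n p k)) : ∀ᵐ ω ∂μ, L ω ≤ n := by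
  have hfiber : ∀ k, ∀ᵐ ω ∂μ, n < k → L ω ≠ k := fun k => by
    by_cases hk : n < k
    · filter_upwards [measure_eq_zero_iff_ae_notMem.1
        (by rw [hL k, binomWeight_of_lt p hk, ENNReal.ofReal_zero])] with ω hω _ using hω
    · exact .of_forall fun _ h => absurd h hk
  filter_upwards [ae_all_iff.2 hfiber] with ω hω
  by_contra! h
  exact hω _ h rfl

theorem stmt15_general {Ω : Type*} [MeasurableSpace Ω] (μ : Measure Ω) [IsProbabilityMeasure μ]
    (n lam : ℕ) (hlam : 1 ≤ lam)
    (L : Ω → ℕ) (hLmeas : Measurable L)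
    (hbinom : ∀ k : ℕ, μ {ω | L ω = k} =
      ENNReal.ofReal ((n.choose k : ℝ) * ((lam : ℝ) / n) ^ k *
        (1 - (lam : ℝ) / n) ^ (n - k)))
    (hpos : 0 < μ {ω | 2 * lam < L ω}) :
    ∫ ω, (L ω : ℝ) ∂(μ[|{ω | 2 * lam < L ω}]) < 3 * lam + 1 := by
  have hL : ∀ k, μ {ω | L ω = k} = ENNReal.ofReal (binomWeight n (lam / n) k) := hbinom
  have hle : ∀ᵐ ω ∂μ, L ω ≤ n := ae_le_of_measure_eq_binomWeight hL
  have hn : 2 * lam < n := lt_of_ae_le_of_measure_lt_pos hle hpos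
  have hn₀ : (0 : ℝ) < n := by exact_mod_cast (by omega : 0 < n)
  have hp₀ : (0 : ℝ) ≤ lam / n := by positivity
  have hp₁ : (lam : ℝ) / n < 1 := (div_lt_one hn₀).2 (by exact_mod_cast (by omega : lam < n))
  have hnp : n * ((lam : ℝ) / n) = lam := mul_div_cancel₀ _ hn₀.ne'
  have hratio : ∀ k, 2 * lam + 1 ≤ k →
      μ.real {ω | L ω = k + 1} ≤ lam / (2 * lam + 2) * μ.real {ω | L ω = k} := fun k hk => by
    have hm : n * ((lam : ℝ) / n) ≤ (2 * lam + 1 : ℕ) := by rw [hnp]; push_cast; linarith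
    convert measureReal_succ_le_of_measure_eq_binomWeight hL hp₀ hp₁ hm hk using 2
    rw [hnp]; push_cast; ring
  have hρ : (lam : ℝ) / (2 * lam + 2) < 1 / 2 := by rw [div_lt_iff₀ (by positivity)]; linarith
  -- `2 * lam < L ω` unfolds to `2 * lam + 1 ≤ L ω`, the event of the tail lemma
  calc ∫ ω, (L ω : ℝ) ∂(μ[|{ω | 2 * lam < L ω}])
      ≤ ((2 * lam + 1 : ℕ) : ℝ) + lam / (2 * lam + 2) / (1 - lam / (2 * lam + 2)) :=
        integral_cond_le_of_measureReal_succ_le hLmeas (by linarith) hle hpos.ne' hratio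
    _ < 3 * lam + 1 := by
        have hρ' : (lam : ℝ) / (2 * lam + 2) / (1 - lam / (2 * lam + 2)) < 1 := by
          rw [div_lt_one (by linarith)]; linarith
        have hlam' : (1 : ℝ) ≤ lam := by exact_mod_cast hlam
        push_cast
        linarith

/-- For `ℓ ∼ Bin(n, λ/n)` with `λ ≤ n`, the conditional expectation satisfies
`E[ℓ | ℓ > 2λ] < 3λ + 1` (assuming the conditioning event has positive
probability). -/
theorem stmt15 {Ω : Type*} [MeasurableSpace Ω] (μ : Measure Ω) [IsProbabilityMeasure μ]
    (n lam : ℕ) (hlam : 1 ≤ lam) (hlamn : lam ≤ n)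
    (L : Ω → ℕ) (hLmeas : Measurable L)
    (hbinom : ∀ k : ℕ, μ {ω | L ω = k} =
      ENNReal.ofReal ((n.choose k : ℝ) * ((lam : ℝ) / n) ^ k *
        (1 - (lam : ℝ) / n) ^ (n - k)))
    (hpos : 0 < μ {ω | 2 * lam < L ω}) :
    ∫ ω, (L ω : ℝ) ∂(μ[|{ω | 2 * lam < L ω}]) < 3 * lam + 1 :=
  stmt15_general μ n lam hlam L hLmeas hbinom hpos
end

section
/- If binary random variables X_1, ..., X_n are negatively correlated (i.e., for all I ⊆ [n], Pr[∀i∈I: X_i = 1] ≤ ∏_{i∈I} Pr[X_i = 1]), then for X = ∑ X_i and any δ ∈ [0,1], Pr[X ≥ (1+δ)E[X]] ≤ exp(−δ²E[X]/3). -/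
/-!
Chernoff's method with `t = log (1 + δ)`. For 0/1-valued variables `exp (t X_i) = 1 + δ X_i`,
so `exp (t ∑ X_i) = ∑_I δ^|I| ∏_{i ∈ I} X_i`, and `∏_{i ∈ I} X_i` is the indicator of
`{∀ i ∈ I, X_i = 1}`. Negative correlation therefore bounds the moment generating function by
`∑_I δ^|I| ∏_{i ∈ I} p_i = ∏ (1 + δ p_i) ≤ exp (δ E)` with `p_i = Pr[X_i = 1]`, as in the
independent case, and Markov's inequality together with `δ + δ²/3 ≤ (1 + δ) log (1 + δ)`
gives the bound.
-/

open MeasureTheory ProbabilityTheory Finset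
open scoped ENNReal

lemma add_sq_div_three_le_mul_log_one_add {δ : ℝ} (h0 : 0 ≤ δ) (h1 : δ ≤ 1) :
    δ + δ ^ 2 / 3 ≤ (1 + δ) * Real.log (1 + δ) := by
  have hlog := Real.le_log_one_add_of_nonneg h0
  calc δ + δ ^ 2 / 3 ≤ (1 + δ) * (2 * δ / (δ + 2)) := by
        rw [mul_div_assoc', le_div_iff₀ (by positivity)]
        nlinarith [mul_nonneg (sq_nonneg δ) (sub_nonneg.2 h1)]
    _ ≤ (1 + δ) * Real.log (1 + δ) := by gcongr

section Binary

variable {ι Ω : Type*} {X : ι → Ω → ℝ}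

lemma prod_eq_indicator_of_binary (hbinary : ∀ i ω, X i ω = 0 ∨ X i ω = 1) (I : Finset ι) :
    (fun ω => ∏ i ∈ I, X i ω) = {ω | ∀ i ∈ I, X i ω = 1}.indicator 1 := by
  funext ω
  by_cases h : ∀ i ∈ I, X i ω = 1
  · rw [Set.indicator_of_mem (Set.mem_ofPred.2 h), prod_eq_one h, Pi.one_apply]
  · obtain ⟨i, hi, hne⟩ := not_forall₂.1 h
    rw [Set.indicator_of_notMem (mt Set.mem_ofPred.1 h)]
    exact prod_eq_zero hi ((hbinary i ω).resolve_right hne)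

lemma exp_log_one_add_mul_sum_of_binary [Fintype ι] (hbinary : ∀ i ω, X i ω = 0 ∨ X i ω = 1)
    {δ : ℝ} (hδ : 0 < 1 + δ) (ω : Ω) :
    Real.exp (Real.log (1 + δ) * ∑ i, X i ω)
      = ∑ I ∈ univ.powerset, δ ^ #I * ∏ i ∈ I, X i ω := by
  calc Real.exp (Real.log (1 + δ) * ∑ i, X i ω)
      = ∏ i, Real.exp (Real.log (1 + δ) * X i ω) := by rw [mul_sum, Real.exp_sum]
    _ = ∏ i, (1 + δ * X i ω) := by
        refine prod_congr rfl fun i _ => ?_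
        rcases hbinary i ω with h | h <;> simp [h, Real.exp_log hδ]
    _ = ∑ I ∈ univ.powerset, δ ^ #I * ∏ i ∈ I, X i ω := by
        simp only [prod_one_add, prod_mul_distrib, prod_const]

variable [MeasurableSpace Ω] {μ : Measure Ω}

lemma measurableSet_forall_eq_one (hmeas : ∀ i, Measurable (X i)) (I : Finset ι) :
    MeasurableSet {ω | ∀ i ∈ I, X i ω = 1} := by
  simp only [Set.ofPred_forall]
  exact .biInter I.countable_toSet fun i _ => hmeas i (measurableSet_singleton 1)

lemma integral_prod_of_binary (hmeas : ∀ i, Measurable (X i))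
    (hbinary : ∀ i ω, X i ω = 0 ∨ X i ω = 1) (I : Finset ι) :
    ∫ ω, ∏ i ∈ I, X i ω ∂μ = μ.real {ω | ∀ i ∈ I, X i ω = 1} := by
  rw [prod_eq_indicator_of_binary hbinary, integral_indicator_one
    (measurableSet_forall_eq_one hmeas I)]

lemma integral_of_binary (hmeas : ∀ i, Measurable (X i))
    (hbinary : ∀ i ω, X i ω = 0 ∨ X i ω = 1) (i : ι) :
    ∫ ω, X i ω ∂μ = μ.real {ω | X i ω = 1} := by
  simpa using integral_prod_of_binary (μ := μ) hmeas hbinary {i}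

variable [IsFiniteMeasure μ]

lemma integrable_prod_of_binary (hmeas : ∀ i, Measurable (X i))
    (hbinary : ∀ i ω, X i ω = 0 ∨ X i ω = 1) (I : Finset ι) :
    Integrable (fun ω => ∏ i ∈ I, X i ω) μ := by
  rw [prod_eq_indicator_of_binary hbinary]
  exact (integrable_const 1).indicator (measurableSet_forall_eq_one hmeas I)

lemma integral_sum_of_binary [Fintype ι] (hmeas : ∀ i, Measurable (X i))
    (hbinary : ∀ i ω, X i ω = 0 ∨ X i ω = 1) :
    ∫ ω, ∑ i, X i ω ∂μ = ∑ i, μ.real {ω | X i ω = 1} := by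
  rw [integral_finsetSum _ fun i _ => by
    simpa using integrable_prod_of_binary (μ := μ) hmeas hbinary {i}]
  exact sum_congr rfl fun i _ => integral_of_binary hmeas hbinary i

lemma integrable_exp_log_one_add_mul_sum_of_binary [Fintype ι] (hmeas : ∀ i, Measurable (X i))
    (hbinary : ∀ i ω, X i ω = 0 ∨ X i ω = 1) {δ : ℝ} (hδ : 0 < 1 + δ) :
    Integrable (fun ω => Real.exp (Real.log (1 + δ) * ∑ i, X i ω)) μ := by
  simp only [exp_log_one_add_mul_sum_of_binary hbinary hδ]
  exact integrable_finsetSum _ fun I _ => (integrable_prod_of_binary hmeas hbinary I).const_mul _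

lemma mgf_sum_le_of_negcor [Fintype ι] (hmeas : ∀ i, Measurable (X i))
    (hbinary : ∀ i ω, X i ω = 0 ∨ X i ω = 1)
    (hnegcor : ∀ I : Finset ι,
      μ {ω | ∀ i ∈ I, X i ω = 1} ≤ ∏ i ∈ I, μ {ω | X i ω = 1})
    {δ : ℝ} (hδ : 0 ≤ δ) :
    mgf (fun ω => ∑ i, X i ω) μ (Real.log (1 + δ))
      ≤ Real.exp (δ * ∑ i, μ.real {ω | X i ω = 1}) := by
  have hint I (_ : I ∈ (univ : Finset ι).powerset) :=
    (integrable_prod_of_binary (μ := μ) hmeas hbinary I).const_mul (δ ^ #I)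
  calc mgf (fun ω => ∑ i, X i ω) μ (Real.log (1 + δ))
      = ∑ I ∈ univ.powerset, δ ^ #I * μ.real {ω | ∀ i ∈ I, X i ω = 1} := by
        simp only [mgf, exp_log_one_add_mul_sum_of_binary hbinary (show 0 < 1 + δ by linarith)]
        rw [integral_finsetSum _ hint]
        simp only [integral_const_mul, integral_prod_of_binary hmeas hbinary]
    _ ≤ ∑ I ∈ univ.powerset, δ ^ #I * ∏ i ∈ I, μ.real {ω | X i ω = 1} := by
        gcongr with I
        simp only [measureReal_def, ← ENNReal.toReal_prod]
        exact ENNReal.toReal_mono (ENNReal.prod_ne_top fun i _ => measure_ne_top μ _) (hnegcor I)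
    _ = ∏ i, (1 + δ * μ.real {ω | X i ω = 1}) := by
        simp only [prod_one_add, prod_mul_distrib, prod_const]
    _ ≤ ∏ i, Real.exp (δ * μ.real {ω | X i ω = 1}) := by
        gcongr with i
        linarith [Real.add_one_le_exp (δ * μ.real {ω | X i ω = 1})]
    _ = Real.exp (δ * ∑ i, μ.real {ω | X i ω = 1}) := by rw [mul_sum, Real.exp_sum]

end Binary

theorem stmt19_general {Ω : Type*} [MeasurableSpace Ω] (μ : Measure Ω) [IsProbabilityMeasure μ]
    (n : ℕ) (X : Fin n → Ω → ℝ)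
    (hmeas : ∀ i, Measurable (X i))
    (hbinary : ∀ i ω, X i ω = 0 ∨ X i ω = 1)
    (hnegcor1 : ∀ I : Finset (Fin n),
      μ {ω | ∀ i ∈ I, X i ω = 1} ≤ ∏ i ∈ I, μ {ω | X i ω = 1})
    (E : ℝ) (hE : E = ∫ ω, (∑ i, X i ω) ∂μ)
    (δ : ℝ) (hδ0 : 0 ≤ δ) (hδ1 : δ ≤ 1) :
    μ {ω | (1 + δ) * E ≤ ∑ i, X i ω}
      ≤ ENNReal.ofReal (Real.exp (-δ ^ 2 * E / 3)) := by
  rw [integral_sum_of_binary hmeas hbinary] at hE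
  subst hE
  set E := ∑ i, μ.real {ω | X i ω = 1}
  have hE0 : 0 ≤ E := by positivity
  have hmgf := mgf_sum_le_of_negcor hmeas hbinary hnegcor1 hδ0
  have hlog := mul_le_mul_of_nonneg_right (add_sq_div_three_le_mul_log_one_add hδ0 hδ1) hE0
  rw [← ofReal_measureReal]
  gcongr
  calc μ.real {ω | (1 + δ) * E ≤ ∑ i, X i ω}
      ≤ Real.exp (-Real.log (1 + δ) * ((1 + δ) * E)) * mgf (fun ω => ∑ i, X i ω) μ
          (Real.log (1 + δ)) :=
        measure_ge_le_exp_mul_mgf _ (Real.log_nonneg (by linarith))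
          (integrable_exp_log_one_add_mul_sum_of_binary hmeas hbinary (by linarith))
    _ ≤ Real.exp (-Real.log (1 + δ) * ((1 + δ) * E)) * Real.exp (δ * E) := by gcongr
    _ ≤ Real.exp (-δ ^ 2 * E / 3) := by
        rw [← Real.exp_add, Real.exp_le_exp]
        linarith

/-- Multiplicative Chernoff upper-tail bound for negatively correlated binary
random variables: if for all `I ⊆ [n]` both `Pr[∀ i ∈ I, X_i = 1] ≤ ∏_{i ∈ I} Pr[X_i = 1]`
and `Pr[∀ i ∈ I, X_i = 0] ≤ ∏_{i ∈ I} Pr[X_i = 0]`, then for `X = ∑ X_i` and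
`δ ∈ [0,1]`, `Pr[X ≥ (1+δ)E[X]] ≤ exp(-δ²E[X]/3)`. -/
theorem stmt19 {Ω : Type*} [MeasurableSpace Ω] (μ : Measure Ω) [IsProbabilityMeasure μ]
    (n : ℕ) (X : Fin n → Ω → ℝ)
    (hmeas : ∀ i, Measurable (X i))
    (hbinary : ∀ i ω, X i ω = 0 ∨ X i ω = 1)
    (hnegcor1 : ∀ I : Finset (Fin n),
      μ {ω | ∀ i ∈ I, X i ω = 1} ≤ ∏ i ∈ I, μ {ω | X i ω = 1})
    (hnegcor0 : ∀ I : Finset (Fin n),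
      μ {ω | ∀ i ∈ I, X i ω = 0} ≤ ∏ i ∈ I, μ {ω | X i ω = 0})
    (E : ℝ) (hE : E = ∫ ω, (∑ i, X i ω) ∂μ)
    (δ : ℝ) (hδ0 : 0 ≤ δ) (hδ1 : δ ≤ 1) :
    μ {ω | (1 + δ) * E ≤ ∑ i, X i ω}
      ≤ ENNReal.ofReal (Real.exp (-δ ^ 2 * E / 3)) :=
  stmt19_general μ n X hmeas hbinary hnegcor1 E hE δ hδ0 hδ1
end
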